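/- arXiv:1604.00434 — 3 statements merged into one kernel-verified Lean document; each statement's English description precedes it below -/
import Mathlib

section
/- For positive definite Hermitian matrices A, B ∈ ℂ^{n×n}, and for all indices i, j, k ∈ {1,...,n} with j + k ≤ i + 1, the i-th largest eigenvalue of AB satisfies λ_i(AB) ≤ λ_j(A)·λ_k(B). -/
/-! Write `M = √A B √A` (with eigenvalues those of `AB`) and use 1-based indices. The span `T` of
the eigenvectors of `M` with eigenvalue `≥ λ_i(M)` has dimension `≥ i`; the span `V` of the
eigenvectors of `A` with eigenvalue `≤ λ_j(A)` has dimension `≥ n - j + 1`; the preimage under `√A`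
of the analogous span `U` for `B` has dimension `≥ n - k + 1`. As `j + k ≤ i + 1`, these three
subspaces share a vector `x ≠ 0`, and
`λ_i(M) ‖x‖² ≤ ⟪x, M x⟫ = ⟪√A x, B √A x⟫ ≤ λ_k(B) ‖√A x‖² = λ_k(B) ⟪x, A x⟫ ≤ λ_k(B) λ_j(A) ‖x‖²`.
-/

open Matrix ComplexOrder

/-- The square root of a positive semidefinite matrix, with its former Mathlib definition
(removed from Mathlib in favour of `CFC.sqrt`). -/
noncomputable def Matrix.PosSemidef.sqrt {𝕜 : Type*} [RCLike 𝕜] {n : Type*} [Fintype n]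
    [DecidableEq n] {A : Matrix n n 𝕜} (hA : A.PosSemidef) : Matrix n n 𝕜 :=
  hA.1.eigenvectorUnitary.1 * diagonal ((↑) ∘ (√·) ∘ hA.1.eigenvalues) *
    (star hA.1.eigenvectorUnitary : Matrix n n 𝕜)

open scoped InnerProductSpace

namespace Submodule

variable {K V : Type*} [DivisionRing K] [AddCommGroup V] [Module K V] [FiniteDimensional K V]

/-- `p.comap f` is the kernel of `V → V ⧸ p`, so its codimension is at most that of `p`. -/
theorem finrank_le_finrank_comap (f : V →ₗ[K] V) (p : Submodule K V) :
    Module.finrank K p ≤ Module.finrank K (p.comap f) := by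
  have hker : p.comap f = LinearMap.ker (p.mkQ ∘ₗ f) := by
    rw [LinearMap.ker_comp, ker_mkQ]
  have hrange := Submodule.finrank_le (LinearMap.range (p.mkQ ∘ₗ f))
  have := (p.mkQ ∘ₗ f).finrank_range_add_finrank_ker
  have := p.finrank_quotient_add_finrank
  rw [hker]
  omega

theorem finrank_add_finrank_le_finrank_inf_add (p q : Submodule K V) :
    Module.finrank K p + Module.finrank K q ≤ Module.finrank K ↥(p ⊓ q) + Module.finrank K V := by
  rw [← finrank_sup_add_finrank_inf_eq, add_comm]
  exact Nat.add_le_add_left (finrank_le _) _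

end Submodule

namespace OrthonormalBasis

variable {ι 𝕜 E : Type*} [Fintype ι] [RCLike 𝕜] [NormedAddCommGroup E] [InnerProductSpace 𝕜 E]
  (b : OrthonormalBasis ι 𝕜 E)

theorem repr_apply_eq_zero_of_mem_span_image {S : Set ι} {x : E}
    (hx : x ∈ Submodule.span 𝕜 (b '' S)) {t : ι} (ht : t ∉ S) : b.repr x t = 0 := by
  rw [b.repr_apply_apply]
  induction hx using Submodule.span_induction with
  | mem y hy =>
    obtain ⟨s, hs, rfl⟩ := hy
    exact b.orthonormal.2 fun h => ht (h ▸ hs)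
  | zero => simp
  | add y z _ _ hy hz => simp [inner_add_right, hy, hz]
  | smul c y _ hy => simp [inner_smul_right, hy]

theorem finrank_span_image (S : Finset ι) :
    Module.finrank 𝕜 (Submodule.span 𝕜 (b '' S)) = S.card := by
  rw [Set.image_eq_range]
  simpa [Function.comp_def] using finrank_span_eq_card
    (b.orthonormal.linearIndependent.comp ((↑) : S → ι) Subtype.val_injective)

end OrthonormalBasis

namespace Matrix

variable {𝕜 ι : Type*} [RCLike 𝕜] [Fintype ι] [DecidableEq ι] {A : Matrix ι ι 𝕜}

theorem PosSemidef.sqrt_eq_conjStarAlgAut (hA : A.PosSemidef) :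
    hA.sqrt = Unitary.conjStarAlgAut 𝕜 _ hA.1.eigenvectorUnitary
      (diagonal ((↑) ∘ (√·) ∘ hA.1.eigenvalues)) :=
  rfl

theorem PosSemidef.sqrt_mul_sqrt (hA : A.PosSemidef) : hA.sqrt * hA.sqrt = A := by
  conv_rhs => rw [hA.1.spectral_theorem]
  rw [hA.sqrt_eq_conjStarAlgAut, ← map_mul, diagonal_mul_diagonal]
  congr 2
  ext t
  simp [← RCLike.ofReal_mul, Real.mul_self_sqrt (hA.eigenvalues_nonneg t)]

theorem PosSemidef.isHermitian_sqrt (hA : A.PosSemidef) : hA.sqrt.IsHermitian := by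
  rw [IsHermitian, ← star_eq_conjTranspose, hA.sqrt_eq_conjStarAlgAut, ← map_star,
    star_eq_conjTranspose, diagonal_conjTranspose]
  congr 2
  ext t
  simp

theorem IsHermitian.inner_toEuclideanLin_mul_mul {R : Matrix ι ι 𝕜} (hR : R.IsHermitian)
    (B : Matrix ι ι 𝕜) (x : EuclideanSpace 𝕜 ι) :
    ⟪x, toEuclideanLin (R * B * R) x⟫_𝕜 =
      ⟪toEuclideanLin R x, toEuclideanLin B (toEuclideanLin R x)⟫_𝕜 := by
  simp only [toLpLin_mul_same, LinearMap.comp_apply]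
  exact (isSymmetric_toEuclideanLin_iff.mpr hR _ _).symm

theorem IsHermitian.eigenvectorBasis_repr_toEuclideanLin (hA : A.IsHermitian)
    (x : EuclideanSpace 𝕜 ι) (t : ι) :
    hA.eigenvectorBasis.repr (toEuclideanLin A x) t =
      hA.eigenvalues t * hA.eigenvectorBasis.repr x t := by
  have hb : toEuclideanLin A (hA.eigenvectorBasis t) =
      (hA.eigenvalues t : 𝕜) • hA.eigenvectorBasis t := by
    ext s
    simpa using congrFun (hA.mulVec_eigenvectorBasis t) s
  rw [OrthonormalBasis.repr_apply_apply, OrthonormalBasis.repr_apply_apply,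
    ← isSymmetric_toEuclideanLin_iff.mpr hA, hb, inner_smul_left, RCLike.conj_ofReal]

theorem IsHermitian.re_inner_toEuclideanLin (hA : A.IsHermitian) (x : EuclideanSpace 𝕜 ι) :
    RCLike.re ⟪x, toEuclideanLin A x⟫_𝕜 =
      ∑ t, hA.eigenvalues t * ‖hA.eigenvectorBasis.repr x t‖ ^ 2 := by
  rw [← hA.eigenvectorBasis.repr.inner_map_map, PiLp.inner_apply, map_sum]
  congr 1 with t
  rw [hA.eigenvectorBasis_repr_toEuclideanLin, ← smul_eq_mul, inner_smul_right,
    inner_self_eq_norm_sq_to_K, ← RCLike.ofReal_pow, RCLike.re_ofReal_mul, RCLike.ofReal_re]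

theorem IsHermitian.re_inner_toEuclideanLin_le_of_mem_span (hA : A.IsHermitian) {S : Set ι}
    {c : ℝ} (hc : ∀ t ∈ S, hA.eigenvalues t ≤ c) {x : EuclideanSpace 𝕜 ι}
    (hx : x ∈ Submodule.span 𝕜 (hA.eigenvectorBasis '' S)) :
    RCLike.re ⟪x, toEuclideanLin A x⟫_𝕜 ≤ c * ‖x‖ ^ 2 := by
  simp_rw [hA.re_inner_toEuclideanLin, ← hA.eigenvectorBasis.sum_sq_norm_inner_right x,
    ← OrthonormalBasis.repr_apply_apply, Finset.mul_sum]
  refine Finset.sum_le_sum fun t _ ↦ ?_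
  by_cases ht : t ∈ S
  · exact mul_le_mul_of_nonneg_right (hc t ht) (sq_nonneg _)
  · simp [hA.eigenvectorBasis.repr_apply_eq_zero_of_mem_span_image hx ht]

theorem IsHermitian.le_re_inner_toEuclideanLin_of_mem_span (hA : A.IsHermitian) {S : Set ι}
    {c : ℝ} (hc : ∀ t ∈ S, c ≤ hA.eigenvalues t) {x : EuclideanSpace 𝕜 ι}
    (hx : x ∈ Submodule.span 𝕜 (hA.eigenvectorBasis '' S)) :
    c * ‖x‖ ^ 2 ≤ RCLike.re ⟪x, toEuclideanLin A x⟫_𝕜 := by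
  simp_rw [hA.re_inner_toEuclideanLin, ← hA.eigenvectorBasis.sum_sq_norm_inner_right x,
    ← OrthonormalBasis.repr_apply_apply, Finset.mul_sum]
  refine Finset.sum_le_sum fun t _ ↦ ?_
  by_cases ht : t ∈ S
  · exact mul_le_mul_of_nonneg_right (hc t ht) (sq_nonneg _)
  · simp [hA.eigenvectorBasis.repr_apply_eq_zero_of_mem_span_image hx ht]

variable {n : ℕ} {μ : Fin n → ℝ}

theorem IsHermitian.exists_finrank_le_forall_re_inner_le (hA : A.IsHermitian) (hμ : Antitone μ)
    (hσ : ∃ σ : Fin n ≃ ι, μ = hA.eigenvalues ∘ σ) (j : Fin n) :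
    ∃ V : Submodule 𝕜 (EuclideanSpace 𝕜 ι), n - j ≤ Module.finrank 𝕜 V ∧
      ∀ x ∈ V, RCLike.re ⟪x, toEuclideanLin A x⟫_𝕜 ≤ μ j * ‖x‖ ^ 2 := by
  obtain ⟨σ, rfl⟩ := hσ
  set S : Finset ι := {t | hA.eigenvalues t ≤ hA.eigenvalues (σ j)}
  refine ⟨Submodule.span 𝕜 (hA.eigenvectorBasis '' S), ?_, fun x hx ↦
    hA.re_inner_toEuclideanLin_le_of_mem_span (by simp [S]) hx⟩
  rw [hA.eigenvectorBasis.finrank_span_image, ← Fin.card_Ici]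
  exact Finset.card_le_card_of_injOn σ (fun s hs ↦ by simpa [S] using hμ (Finset.mem_Ici.1 hs))
    σ.injective.injOn

theorem IsHermitian.exists_finrank_le_forall_le_re_inner (hA : A.IsHermitian) (hμ : Antitone μ)
    (hσ : ∃ σ : Fin n ≃ ι, μ = hA.eigenvalues ∘ σ) (i : Fin n) :
    ∃ T : Submodule 𝕜 (EuclideanSpace 𝕜 ι), i + 1 ≤ Module.finrank 𝕜 T ∧
      ∀ x ∈ T, μ i * ‖x‖ ^ 2 ≤ RCLike.re ⟪x, toEuclideanLin A x⟫_𝕜 := by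
  obtain ⟨σ, rfl⟩ := hσ
  set S : Finset ι := {t | hA.eigenvalues (σ i) ≤ hA.eigenvalues t}
  refine ⟨Submodule.span 𝕜 (hA.eigenvectorBasis '' S), ?_, fun x hx ↦
    hA.le_re_inner_toEuclideanLin_of_mem_span (by simp [S]) hx⟩
  rw [hA.eigenvectorBasis.finrank_span_image, ← Fin.card_Iic]
  exact Finset.card_le_card_of_injOn σ (fun s hs ↦ by simpa [S] using hμ (Finset.mem_Iic.1 hs))
    σ.injective.injOn

end Matrix

/-- Wang–Zhang eigenvalue inequality: for positive definite Hermitian `A, B` and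
decreasingly-ordered eigenvalue lists `μA, μB` of `A, B` and `μM` of `AB`
(whose eigenvalues agree with those of the Hermitian matrix `√A * B * √A`),
if `j + k ≤ i + 1` (1-based indexing) then `λ_i(AB) ≤ λ_j(A) * λ_k(B)`. -/
theorem eigenvalue_product_inequality
    {n : ℕ} {A B : Matrix (Fin n) (Fin n) ℂ}
    (hA : A.PosDef) (hB : B.PosDef)
    (hM : (hA.posSemidef.sqrt * B * hA.posSemidef.sqrt).IsHermitian)
    (μA μB μM : Fin n → ℝ)
    (hμA : Antitone μA) (hμB : Antitone μB) (hμM : Antitone μM)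
    (hA' : ∃ σ : Equiv.Perm (Fin n), μA = hA.1.eigenvalues ∘ σ)
    (hB' : ∃ σ : Equiv.Perm (Fin n), μB = hB.1.eigenvalues ∘ σ)
    (hM' : ∃ σ : Equiv.Perm (Fin n), μM = hM.eigenvalues ∘ σ)
    (i j k : Fin n) (hijk : (j : ℕ) + 1 + ((k : ℕ) + 1) ≤ (i : ℕ) + 1 + 1) :
    μM i ≤ μA j * μB k := by
  set R := hA.posSemidef.sqrt
  have hR : R.IsHermitian := hA.posSemidef.isHermitian_sqrt
  set L := toEuclideanLin R
  obtain ⟨T, hT, hTM⟩ := hM.exists_finrank_le_forall_le_re_inner hμM hM' i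
  obtain ⟨V, hV, hVA⟩ := hA.1.exists_finrank_le_forall_re_inner_le hμA hA' j
  obtain ⟨U, hU, hUB⟩ := hB.1.exists_finrank_le_forall_re_inner_le hμB hB' k
  obtain ⟨x, ⟨⟨hxT, hxV⟩, hxU⟩, hx0⟩ : ∃ x ∈ T ⊓ V ⊓ U.comap L, x ≠ 0 := by
    refine Submodule.exists_mem_ne_zero_of_ne_bot fun hbot ↦ ?_
    have hTV := T.finrank_add_finrank_le_finrank_inf_add V
    have hTVU := (T ⊓ V).finrank_add_finrank_le_finrank_inf_add (U.comap L)
    have hUL := U.finrank_le_finrank_comap L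
    rw [hbot, finrank_bot, finrank_euclideanSpace_fin] at hTVU
    rw [finrank_euclideanSpace_fin] at hTV
    omega
  have hμB_nonneg : 0 ≤ μB k := by
    obtain ⟨σ, rfl⟩ := hB'
    exact (hB.eigenvalues_pos (σ k)).le
  have hAx : RCLike.re ⟪x, toEuclideanLin A x⟫_ℂ = ‖L x‖ ^ 2 := by
    have hRR : R * 1 * R = A := by rw [mul_one]; exact hA.posSemidef.sqrt_mul_sqrt
    rw [← hRR, hR.inner_toEuclideanLin_mul_mul, toLpLin_one, LinearMap.id_apply,
      inner_self_eq_norm_sq_to_K, ← RCLike.ofReal_pow, RCLike.ofReal_re]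
  refine le_of_mul_le_mul_right ?_ (pow_pos (norm_pos_iff.2 hx0) 2)
  calc μM i * ‖x‖ ^ 2 ≤ RCLike.re ⟪x, toEuclideanLin (R * B * R) x⟫_ℂ := hTM x hxT
    _ = RCLike.re ⟪L x, toEuclideanLin B (L x)⟫_ℂ := by rw [hR.inner_toEuclideanLin_mul_mul]
    _ ≤ μB k * ‖L x‖ ^ 2 := hUB _ hxU
    _ = μB k * RCLike.re ⟪x, toEuclideanLin A x⟫_ℂ := by rw [hAx]
    _ ≤ μB k * (μA j * ‖x‖ ^ 2) := mul_le_mul_of_nonneg_left (hVA x hxV) hμB_nonneg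
    _ = μA j * μB k * ‖x‖ ^ 2 := by ring
end

section
/- Let H ∈ ℂ^{m×n} and let S, S₀ be n×n Hermitian positive semidefinite matrices. Then log det(I + H S Hᴴ) ≤ log det(I + H S₀ Hᴴ) + Tr( Hᴴ (I + H S₀ Hᴴ)⁻¹ H (S − S₀) ). That is, the first-order Taylor expansion of S ↦ log det(I + H S Hᴴ) at S₀ is a global upper bound. -/
/-!
Put `A = 1 + H S₀ Hᴴ` and `B = 1 + H S Hᴴ`, both positive definite; by cyclicity of the trace the
linear term is `Tr (A⁻¹ (B - A))`. The congruence `M = A^{-1/2} B A^{-1/2}` is positive definite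
with `det M = det B / det A` and `Tr M = Tr (A⁻¹ B)`, and `log λ ≤ λ - 1` summed over the
eigenvalues of `M` gives `log det M ≤ Tr M - n`, which is the claim.
-/

open Matrix ComplexOrder

namespace Matrix

variable {n 𝕜 : Type*} [Fintype n] [DecidableEq n] [RCLike 𝕜] {A B M : Matrix n n 𝕜}

lemma PosDef.ofReal_re_det (hA : A.PosDef) : ((RCLike.re A.det : ℝ) : 𝕜) = A.det :=
  RCLike.conj_eq_iff_re.mp (RCLike.conj_eq_iff_im.mpr (RCLike.pos_iff.mp hA.det_pos).2)

lemma PosDef.log_re_det_le_re_trace_sub_card (hM : M.PosDef) :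
    Real.log (RCLike.re M.det) ≤ RCLike.re M.trace - Fintype.card n := by
  have hpos := hM.eigenvalues_pos
  rw [hM.isHermitian.det_eq_prod_eigenvalues, hM.isHermitian.trace_eq_sum_eigenvalues,
    ← RCLike.ofReal_prod, ← RCLike.ofReal_sum, RCLike.ofReal_re, RCLike.ofReal_re,
    Real.log_prod fun i _ ↦ (hpos i).ne']
  calc ∑ i, Real.log (hM.isHermitian.eigenvalues i)
      ≤ ∑ i, (hM.isHermitian.eigenvalues i - 1) :=
        Finset.sum_le_sum fun i _ ↦ Real.log_le_sub_one_of_pos (hpos i)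
    _ = _ := by simp [Finset.sum_sub_distrib]

open scoped MatrixOrder in
theorem PosDef.log_re_det_le_log_re_det_add_re_trace (hA : A.PosDef) (hB : B.PosDef) :
    Real.log (RCLike.re B.det) ≤
      Real.log (RCLike.re A.det) + RCLike.re (A⁻¹ * (B - A)).trace := by
  set T := CFC.sqrt A⁻¹
  have hT_sq : T * T = A⁻¹ := CFC.sqrt_mul_sqrt_self _ hA.inv.posSemidef.nonneg
  have hT_star : star T = T := (CFC.sqrt_nonneg A⁻¹).posSemidef.1
  have hT_unit : IsUnit T := (CFC.isUnit_sqrt_iff _ hA.inv.posSemidef.nonneg).mpr hA.inv.isUnit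
  have hM : (T * B * T).PosDef := by
    simpa only [hT_star] using hT_unit.posDef_star_right_conjugate_iff.mpr hB
  have hdet : (T * B * T).det = A.det⁻¹ * B.det := by
    rw [det_mul, det_mul, mul_right_comm, ← det_mul, hT_sq, det_nonsing_inv, Ring.inverse_eq_inv']
  have htrace : (T * B * T).trace = (A⁻¹ * B).trace := by
    rw [trace_mul_cycle, hT_sq]
  have hA_ne : RCLike.re A.det ≠ 0 := (RCLike.pos_iff.mp hA.det_pos).1.ne'
  have hB_ne : RCLike.re B.det ≠ 0 := (RCLike.pos_iff.mp hB.det_pos).1.ne'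
  have key := hM.log_re_det_le_re_trace_sub_card
  rw [hdet, ← hA.ofReal_re_det, ← hB.ofReal_re_det, ← RCLike.ofReal_inv, ← RCLike.ofReal_mul,
    RCLike.ofReal_re, Real.log_mul (inv_ne_zero hA_ne) hB_ne, Real.log_inv, htrace] at key
  rw [mul_sub, trace_sub, nonsing_inv_mul _ ((isUnit_iff_isUnit_det A).mp hA.isUnit), trace_one,
    map_sub, RCLike.natCast_re]
  linarith

end Matrix

/-- First-order (concavity) upper bound: for Hermitian PSD `S, S₀`,
`log det(I + H S Hᴴ) ≤ log det(I + H S₀ Hᴴ) + Tr(Hᴴ(I + H S₀ Hᴴ)⁻¹H (S − S₀))`. -/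
theorem logdet_taylor_upper_bound
    {m n : ℕ} (H : Matrix (Fin m) (Fin n) ℂ) (S S₀ : Matrix (Fin n) (Fin n) ℂ)
    (hS : S.PosSemidef) (hS₀ : S₀.PosSemidef) :
    Real.log ((1 + H * S * Hᴴ).det.re) ≤
      Real.log ((1 + H * S₀ * Hᴴ).det.re) +
        (Matrix.trace (Hᴴ * (1 + H * S₀ * Hᴴ)⁻¹ * H * (S - S₀))).re := by
  have hA := PosDef.one.add_posSemidef (hS₀.mul_mul_conjTranspose_same H)
  have hB := PosDef.one.add_posSemidef (hS.mul_mul_conjTranspose_same H)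
  have htrace : (Hᴴ * (1 + H * S₀ * Hᴴ)⁻¹ * H * (S - S₀)).trace =
      ((1 + H * S₀ * Hᴴ)⁻¹ * ((1 + H * S * Hᴴ) - (1 + H * S₀ * Hᴴ))).trace := by
    rw [add_sub_add_left_eq_sub, ← Matrix.sub_mul, ← Matrix.mul_sub, Matrix.mul_assoc,
      Matrix.mul_assoc, trace_mul_comm, Matrix.mul_assoc]
  rw [htrace]
  exact hA.log_re_det_le_log_re_det_add_re_trace hB
end

section
/- Let H ∈ ℂ^{m×n}, γ ≥ (1/2)λ_max(HᴴH)², and G(S₀) = Hᴴ(I + H S₀ Hᴴ)⁻¹H. Then for all Hermitian PSD n×n matrices S and S₀: log det(I + H S Hᴴ) ≥ log det(I + H S₀ Hᴴ) + Re Tr(G(S₀)(S − S₀)) − γ Tr((S − S₀)ᴴ(S − S₀)). That is, the quadratic function on the right is a global minorant of log det(I + H S Hᴴ) that is tight at S₀. -/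
/-!
Along the segment `S₀ + t • (S - S₀)`, `t ∈ [0, 1]`, put `A t = 1 + H S₀ Hᴴ + t • M` with
`M = H (S - S₀) Hᴴ` and `φ t = log det (A t)`, so that `φ' t = Re tr ((A t)⁻¹ M)` and `φ' 0` is the
trace term of `G(S₀)`. The resolvent identity `A₀⁻¹ - A_t⁻¹ = t • A₀⁻¹ M A_t⁻¹`, together with
`0 ≤ (A t)⁻¹ ≤ 1` (as `A t = 1 + (psd)`), gives `φ' 0 - φ' t ≤ t Re tr (M M)`, and
`Hᴴ H ≤ λ_max • 1` bounds `Re tr (M M) ≤ λ_max² ‖S - S₀‖_F²`. Integrating this lower bound on `φ'`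
over `[0, 1]` yields `φ 1 ≥ φ 0 + φ' 0 - ½ λ_max² ‖S - S₀‖_F²`.
-/

open Matrix ComplexOrder Set Polynomial
open scoped MatrixOrder

theorem image_one_ge_of_deriv_ge {f f' : ℝ → ℝ} {L : ℝ}
    (hf : ∀ t ∈ Icc (0 : ℝ) 1, HasDerivAt f (f' t) t)
    (hf' : ∀ t ∈ Icc (0 : ℝ) 1, f' 0 - L * t ≤ f' t) : f 0 + f' 0 - L / 2 ≤ f 1 := by
  set F := fun t ↦ f t - f' 0 * t + L / 2 * t ^ 2
  have hF (t : ℝ) (ht : t ∈ Icc (0 : ℝ) 1) : HasDerivAt F (f' t - f' 0 + L * t) t := by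
    refine (((hf t ht).sub ((hasDerivAt_id' t).const_mul (f' 0))).add
      ((hasDerivAt_pow 2 t).const_mul (L / 2))).congr_deriv ?_
    push_cast; ring
  have hmono : MonotoneOn F (Icc 0 1) := by
    refine monotoneOn_of_hasDerivWithinAt_nonneg (convex_Icc 0 1)
      (fun t ht ↦ (hF t ht).continuousAt.continuousWithinAt)
      (fun t ht ↦ (hF t (interior_subset ht)).hasDerivWithinAt) fun t ht ↦ ?_
    linarith [hf' t (interior_subset ht)]
  have := hmono (left_mem_Icc.mpr zero_le_one) (right_mem_Icc.mpr zero_le_one) zero_le_one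
  simp only [F] at this
  linarith

namespace Matrix

section RCLike

variable {𝕜 n : Type*} [RCLike 𝕜] [Fintype n] [DecidableEq n]

theorem PosSemidef.trace_mul_nonneg {X Y : Matrix n n 𝕜} (hX : X.PosSemidef)
    (hY : Y.PosSemidef) : 0 ≤ (X * Y).trace := by
  have hR : (CFC.sqrt X).IsHermitian := (CFC.sqrt_nonneg X).posSemidef.isHermitian
  have := (hY.conjTranspose_mul_mul_same (CFC.sqrt X)).trace_nonneg
  rwa [hR.eq, trace_mul_cycle, CFC.sqrt_mul_sqrt_self X hX.nonneg] at this

theorem PosSemidef.re_trace_mul_le_of_le {X Y Z : Matrix n n 𝕜} (hX : X.PosSemidef)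
    (hYZ : Y ≤ Z) : RCLike.re (X * Y).trace ≤ RCLike.re (X * Z).trace := by
  have := (RCLike.nonneg_iff.mp (hX.trace_mul_nonneg hYZ)).1
  rwa [Matrix.mul_sub, trace_sub, map_sub, sub_nonneg] at this

theorem IsHermitian.le_iSup_eigenvalues_smul_one {K : Matrix n n 𝕜} (hK : K.IsHermitian) :
    K ≤ ((⨆ i, hK.eigenvalues i : ℝ) : 𝕜) • 1 := by
  rw [← RCLike.real_smul_eq_coe_smul, ← Algebra.algebraMap_eq_smul_one]
  refine le_algebraMap_of_spectrum_le ?_ hK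
  rw [hK.spectrum_real_eq_range_eigenvalues]
  rintro _ ⟨i, rfl⟩
  exact le_ciSup (finite_range _).bddAbove i

theorem re_trace_mul_mul_mul_le {P Q M : Matrix n n 𝕜} (hP : P ≤ 1) (hQ₀ : Q.PosSemidef)
    (hQ₁ : Q ≤ 1) (hM : M.IsHermitian) :
    RCLike.re (P * M * Q * M).trace ≤ RCLike.re (M * M).trace := by
  have hMQM : (M * Q * M).PosSemidef := by
    simpa [hM.eq] using hQ₀.conjTranspose_mul_mul_same M
  have hMM : (M * M).PosSemidef := by
    simpa [hM.eq] using posSemidef_conjTranspose_mul_self M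
  calc RCLike.re (P * M * Q * M).trace = RCLike.re (M * Q * M * P).trace := by
        rw [show P * M * Q * M = P * (M * Q * M) by simp only [Matrix.mul_assoc], trace_mul_comm]
    _ ≤ RCLike.re (M * Q * M * 1).trace := hMQM.re_trace_mul_le_of_le hP
    _ = RCLike.re (M * M * Q).trace := by rw [Matrix.mul_one, trace_mul_cycle, Matrix.mul_assoc]
    _ ≤ RCLike.re (M * M * 1).trace := hMM.re_trace_mul_le_of_le hQ₁
    _ = RCLike.re (M * M).trace := by rw [Matrix.mul_one]

theorem re_trace_conjugate_mul_conjugate_le {m : Type*} [Fintype m] {H : Matrix m n 𝕜}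
    {Δ : Matrix n n 𝕜} {c : ℝ} (hc : 0 ≤ c) (hH : Hᴴ * H ≤ (c : 𝕜) • 1) (hΔ : Δ.IsHermitian) :
    RCLike.re ((H * Δ * Hᴴ) * (H * Δ * Hᴴ)).trace ≤ c ^ 2 * RCLike.re (Δᴴ * Δ).trace := by
  set K := Hᴴ * H
  have re_trace_mul_le (X : Matrix n n 𝕜) (hX : X.PosSemidef) :
      RCLike.re (X * K).trace ≤ c * RCLike.re X.trace := by
    simpa [trace_smul, RCLike.smul_re] using hX.re_trace_mul_le_of_le hH
  calc RCLike.re ((H * Δ * Hᴴ) * (H * Δ * Hᴴ)).trace = RCLike.re (Δ * K * Δ * K).trace := by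
        simp only [K, Matrix.mul_assoc]
        rw [trace_mul_comm]
        simp only [Matrix.mul_assoc]
    _ ≤ c * RCLike.re (Δ * K * Δ).trace := re_trace_mul_le _ <| by
        simpa [hΔ.eq] using (posSemidef_conjTranspose_mul_self H).conjTranspose_mul_mul_same Δ
    _ = c * RCLike.re (Δ * Δ * K).trace := by rw [trace_mul_cycle]
    _ ≤ c * (c * RCLike.re (Δ * Δ).trace) := by
        gcongr
        exact re_trace_mul_le _ (by simpa [hΔ.eq] using posSemidef_conjTranspose_mul_self Δ)
    _ = c ^ 2 * RCLike.re (Δᴴ * Δ).trace := by rw [hΔ.eq]; ring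

end RCLike

variable {n : Type*} [Fintype n] [DecidableEq n]

section Deriv

variable {𝕜 : Type*} [NontriviallyNormedField 𝕜]

theorem hasDerivAt_det_one_add_smul (N : Matrix n n 𝕜) :
    HasDerivAt (fun z : 𝕜 ↦ (1 + z • N).det) N.trace 0 := by
  set p := (det (1 + (X : 𝕜[X]) • N.map C)).divX.divX
  have hp : HasDerivAt (fun z : 𝕜 ↦ p.eval z * z ^ 2) 0 0 := by
    simpa using (p.hasDerivAt 0).fun_mul (hasDerivAt_pow 2 (0 : 𝕜))
  have hlin : HasDerivAt (fun z : 𝕜 ↦ 1 + N.trace * z) N.trace 0 := by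
    simpa using ((hasDerivAt_id (0 : 𝕜)).const_mul N.trace).const_add 1
  have hdet : (fun z : 𝕜 ↦ (1 + z • N).det) = fun z ↦ 1 + N.trace * z + p.eval z * z ^ 2 :=
    funext fun z ↦ det_one_add_smul z N
  simpa [hdet] using hlin.fun_add hp

theorem hasDerivAt_det_add_smul {A : Matrix n n 𝕜} (hA : IsUnit A.det) (M : Matrix n n 𝕜) :
    HasDerivAt (fun z : 𝕜 ↦ (A + z • M).det) (A.det * (A⁻¹ * M).trace) 0 := by
  have h (z : 𝕜) : A + z • M = A * (1 + z • (A⁻¹ * M)) := by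
    rw [Matrix.mul_add, Matrix.mul_one, Matrix.mul_smul, mul_nonsing_inv_cancel_left _ _ hA]
  simpa only [h, det_mul] using (hasDerivAt_det_one_add_smul (A⁻¹ * M)).const_mul A.det

end Deriv

theorem hasDerivAt_log_re_det_add_smul {A M : Matrix n n ℂ} {t : ℝ} (h : (A + t • M).PosDef) :
    HasDerivAt (fun s : ℝ ↦ Real.log (A + s • M).det.re) ((A + t • M)⁻¹ * M).trace.re t := by
  obtain ⟨r, hr, hdet⟩ := RCLike.pos_iff_exists_ofReal.mp h.det_pos
  have hshift (s : ℝ) : A + s • M = (A + t • M) + ((s - t : ℝ) : ℂ) • M := by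
    rw [Complex.coe_smul, sub_smul]; abel
  have hre := (hasDerivAt_det_add_smul ((isUnit_iff_isUnit_det _).mp h.isUnit) M).real_of_complex
  rw [← sub_self t] at hre
  have hre_shift := hre.comp_sub_const t t
  simp only [← hshift] at hre_shift
  refine (hre_shift.log ?_).congr_deriv ?_ <;> rw [← hdet]
  · simpa using hr.ne'
  · simp [hr.ne']

open scoped Matrix.Norms.L2Operator in
theorem PosSemidef.inv_one_add_le_one {W : Matrix n n ℂ} (hW : W.PosSemidef) :
    (1 + W)⁻¹ ≤ 1 := by
  rw [nonsing_inv_eq_ringInverse]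
  simpa using CStarAlgebra.ringInverse_le_ringInverse (a := 1) (le_add_of_nonneg_right hW.nonneg)
    isStrictlyPositive_one

theorem re_trace_inv_one_add_mul_sub_le {W M : Matrix n n ℂ} {t : ℝ} (ht : 0 ≤ t)
    (hW : W.PosSemidef) (hWt : (W + t • M).PosSemidef) (hM : M.IsHermitian) :
    ((1 + W)⁻¹ * M).trace.re - ((1 + W + t • M)⁻¹ * M).trace.re ≤ t * (M * M).trace.re := by
  rw [add_assoc]
  have hA := (PosDef.one.add_posSemidef hW).isUnit
  have hB := (PosDef.one.add_posSemidef hWt).isUnit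
  have hres : (1 + W)⁻¹ - (1 + (W + t • M))⁻¹ = t • ((1 + W)⁻¹ * M * (1 + (W + t • M))⁻¹) := by
    rw [inv_sub_inv (iff_of_true hA hB), ← add_assoc, add_sub_cancel_left, Matrix.mul_smul,
      Matrix.smul_mul]
  have hcore := re_trace_mul_mul_mul_le hW.inv_one_add_le_one
    (PosDef.one.add_posSemidef hWt).inv.posSemidef hWt.inv_one_add_le_one hM
  calc ((1 + W)⁻¹ * M).trace.re - ((1 + (W + t • M))⁻¹ * M).trace.re
      = t * ((1 + W)⁻¹ * M * (1 + (W + t • M))⁻¹ * M).trace.re := by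
        rw [← Complex.sub_re, ← trace_sub, ← Matrix.sub_mul, hres, Matrix.smul_mul, trace_smul,
          Complex.smul_re, smul_eq_mul]
    _ ≤ t * (M * M).trace.re := mul_le_mul_of_nonneg_left hcore ht

end Matrix

/-- Quadratic global minorant (Proposition 1): for `γ ≥ (1/2) λ_max(HᴴH)²` and Hermitian PSD
`S, S₀`, `log det(I + H S Hᴴ) ≥ log det(I + H S₀ Hᴴ) + Re Tr(G(S₀)(S − S₀))
− γ Tr((S − S₀)ᴴ(S − S₀))` where `G(S₀) = Hᴴ(I + H S₀ Hᴴ)⁻¹H`. -/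
theorem quadratic_surrogate_minorant
    {m n : ℕ} (H : Matrix (Fin m) (Fin n) ℂ) (γ : ℝ)
    (hγ : (1 / 2) * (⨆ j, (isHermitian_mul_conjTranspose_self Hᴴ).eigenvalues j) ^ 2 ≤ γ)
    (S S₀ : Matrix (Fin n) (Fin n) ℂ) (hS : S.PosSemidef) (hS₀ : S₀.PosSemidef) :
    Real.log ((1 + H * S₀ * Hᴴ).det.re) +
        (Matrix.trace ((Hᴴ * (1 + H * S₀ * Hᴴ)⁻¹ * H) * (S - S₀))).re -
        γ * (Matrix.trace ((S - S₀)ᴴ * (S - S₀))).re ≤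
      Real.log ((1 + H * S * Hᴴ).det.re) := by
  set Δ := S - S₀ with hΔ
  set M := H * Δ * Hᴴ
  set W₀ := H * S₀ * Hᴴ
  set c := ⨆ j, (isHermitian_mul_conjTranspose_self Hᴴ).eigenvalues j
  set D := (Δᴴ * Δ).trace.re
  have hc : 0 ≤ c :=
    Real.iSup_nonneg fun j ↦ (posSemidef_self_mul_conjTranspose Hᴴ).eigenvalues_nonneg j
  have hHH : Hᴴ * H ≤ (c : ℂ) • 1 :=
    calc Hᴴ * H = Hᴴ * Hᴴᴴ := by rw [conjTranspose_conjTranspose]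
      _ ≤ (c : ℂ) • 1 := (isHermitian_mul_conjTranspose_self Hᴴ).le_iSup_eigenvalues_smul_one
  have hMM : (M * M).trace.re ≤ c ^ 2 * D :=
    re_trace_conjugate_mul_conjugate_le hc hHH (hS.1.sub hS₀.1)
  have hD : 0 ≤ D := (RCLike.nonneg_iff.mp (posSemidef_conjTranspose_mul_self Δ).trace_nonneg).1
  have hpath (t : ℝ) (ht : t ∈ Icc (0 : ℝ) 1) : (W₀ + t • M).PosSemidef := by
    have hconv : S₀ + t • Δ = (1 - t) • S₀ + t • S := by rw [hΔ]; module
    have := ((hS₀.smul (sub_nonneg.2 ht.2)).add (hS.smul ht.1)).mul_mul_conjTranspose_same H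
    rwa [← hconv, Matrix.mul_add, Matrix.add_mul, Matrix.mul_smul, Matrix.smul_mul] at this
  have key := image_one_ge_of_deriv_ge (L := c ^ 2 * D)
    (f := fun t ↦ Real.log (1 + W₀ + t • M).det.re)
    (f' := fun t ↦ ((1 + W₀ + t • M)⁻¹ * M).trace.re)
    (fun t ht ↦ hasDerivAt_log_re_det_add_smul
      (add_assoc 1 W₀ _ ▸ PosDef.one.add_posSemidef (hpath t ht)))
    fun t ht ↦ by
      have := re_trace_inv_one_add_mul_sub_le ht.1 (hS₀.mul_mul_conjTranspose_same H) (hpath t ht)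
        (isHermitian_mul_mul_conjTranspose H (hS.1.sub hS₀.1))
      rw [zero_smul, add_zero]
      nlinarith [mul_le_mul_of_nonneg_left hMM ht.1]
  have hB : 1 + W₀ + (1 : ℝ) • M = 1 + H * S * Hᴴ := by
    rw [one_smul, add_assoc, ← Matrix.add_mul, ← Matrix.mul_add, hΔ, add_sub_cancel]
  have hG : (Hᴴ * (1 + W₀)⁻¹ * H * Δ).trace = ((1 + W₀)⁻¹ * M).trace := by
    rw [Matrix.mul_assoc, Matrix.mul_assoc, trace_mul_comm]
    simp only [M, Matrix.mul_assoc]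
  simp only [zero_smul, add_zero, hB] at key
  rw [hG]
  nlinarith [mul_le_mul_of_nonneg_right hγ hD]
end
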